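/- Let k and n be integers with k odd, 3 ≤ k < n, and set m = (k−1)/2. Define μ_l = (k/n) · C(n, l+1) / C(k, l+1) for l = 0, 1, ..., k − 1. Then the m×m shifted Hankel matrix H' with entries H'_{ij} = μ_{i+j+1} for 0 ≤ i, j ≤ m − 1 is positive definite. -/

import Mathlib

open Matrix MeasureTheory

open intervalIntegral in
lemma beta_nat (p q : ℕ) : ∫ x in (0:ℝ)..1, x^p*(1-x)^q
    = (p.factorial * q.factorial : ℝ)/(p+q+1).factorial := by
  have h := Complex.Gamma_mul_Gamma_eq_betaIntegral
    (s := (p+1 : ℂ)) (t := (q+1 : ℂ)) (by simp; positivity) (by simp; positivity)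
  have hβ : Complex.betaIntegral (p+1) (q+1)
      = ((∫ x in (0:ℝ)..1, x^p*(1-x)^q : ℝ) : ℂ) := by
    rw [Complex.betaIntegral, ← intervalIntegral.integral_ofReal]
    apply intervalIntegral.integral_congr
    intro x _
    simp only [show (p:ℂ)+1-1 = (p:ℕ) by ring, show (q:ℂ)+1-1 = (q:ℕ) by ring,
      Complex.cpow_natCast]
    push_cast
    ring
  rw [hβ] at h
  have hg1 : Complex.Gamma (p+1) = (p.factorial : ℂ) := by
    simpa using Complex.Gamma_nat_eq_factorial p
  have hg2 : Complex.Gamma (q+1) = (q.factorial : ℂ) := by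
    simpa using Complex.Gamma_nat_eq_factorial q
  have hg3 : Complex.Gamma ((p:ℂ)+1+((q:ℂ)+1)) = ((p+q+1).factorial : ℂ) := by
    rw [show (p:ℂ)+1+((q:ℂ)+1) = ((p+q+1 : ℕ) : ℂ)+1 by push_cast; ring]
    exact_mod_cast Complex.Gamma_nat_eq_factorial (p+q+1)
  rw [hg1, hg2, hg3] at h
  have hne : ((p+q+1).factorial : ℂ) ≠ 0 := by exact_mod_cast (Nat.factorial_pos _).ne'
  field_simp at h ⊢
  have h' : (p.factorial * q.factorial : ℝ)
      = ((p+q+1).factorial : ℝ) * ∫ x in (0:ℝ)..1, x^p*(1-x)^q := by exact_mod_cast h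
  linarith

lemma moment_key (w b l d : ℕ) (hd : l + d = 2*w) :
    (2*w+1) * ((2*w+2+b).choose (l+1)) * (2*w).factorial * (d+b+1).factorial
    = (2*w+2+b) * ((2*w+1).choose (l+1)) * (2*w+1+b).factorial * d.factorial := by
  have h1 : (2*w+2+b).choose (l+1) * (l+1).factorial * (d+b+1).factorial
      = (2*w+2+b).factorial := by
    have := Nat.choose_mul_factorial_mul_factorial (show l+1 ≤ 2*w+2+b by omega)
    rwa [show 2*w+2+b - (l+1) = d+b+1 by omega] at this
  have h2 : (2*w+1).choose (l+1) * (l+1).factorial * d.factorial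
      = (2*w+1).factorial := by
    have := Nat.choose_mul_factorial_mul_factorial (show l+1 ≤ 2*w+1 by omega)
    rwa [show 2*w+1 - (l+1) = d by omega] at this
  have e1 : (2*w+1).factorial = (2*w+1) * (2*w).factorial := Nat.factorial_succ (2*w)
  have e2 : (2*w+2+b).factorial = (2*w+2+b) * (2*w+1+b).factorial := by
    rw [show 2*w+2+b = (2*w+1+b)+1 by omega, Nat.factorial_succ]
  apply Nat.eq_of_mul_eq_mul_right (Nat.factorial_pos (l+1))
  zify at h1 h2 e1 e2 ⊢
  linear_combination ((2*w+1 : ℤ)*(2*w).factorial)*h1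
    - ((2*w+2+b : ℤ)*(2*w+1+b).factorial)*h2
    - ((2*w+2+b : ℤ)*(2*w+1+b).factorial)*e1
    + ((2*w+1 : ℤ)*(2*w).factorial)*e2

lemma moment_eq (w b l : ℕ) (hl : l ≤ 2*w) :
    ((2*w+1:ℕ):ℝ)/((2*w+2+b:ℕ):ℝ) * ((2*w+2+b).choose (l+1)) / ((2*w+1).choose (l+1))
    = ((2*w+1+b).factorial / ((2*w).factorial * b.factorial))
      * (((2*w-l).factorial * b.factorial) / ((2*w-l)+b+1).factorial) := by
  obtain ⟨d, hd⟩ : ∃ d, l + d = 2*w := ⟨2*w - l, by omega⟩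
  rw [show 2*w - l = d by omega]
  have key := moment_key w b l d hd
  have keyR : ((2*w+1 : ℕ) : ℝ) * ((2*w+2+b).choose (l+1)) * (2*w).factorial
      * (d+b+1).factorial
      = ((2*w+2+b : ℕ) : ℝ) * ((2*w+1).choose (l+1)) * (2*w+1+b).factorial * d.factorial := by
    exact_mod_cast key
  have hck : ((2*w+1).choose (l+1) : ℝ) ≠ 0 := by
    have : 0 < (2*w+1).choose (l+1) := Nat.choose_pos (by omega)
    positivity
  have h1 : ((2*w+2+b : ℕ) : ℝ) ≠ 0 := by positivity
  have h2 : ((2*w).factorial : ℝ) ≠ 0 := by positivity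
  have h3 : ((b).factorial : ℝ) ≠ 0 := by positivity
  have h4 : ((d+b+1).factorial : ℝ) ≠ 0 := by positivity
  field_simp
  push_cast at keyR ⊢
  linear_combination keyR

set_option maxHeartbeats 1000000 in
/-- The m×m shifted Hankel matrix of the moments
μ_l = (k/n)·C(n,l+1)/C(k,l+1) is positive definite, where m = (k−1)/2. -/
theorem stmt5 (k n : ℕ) (hodd : Odd k) (hk : 3 ≤ k) (hkn : k < n)
    (m : ℕ) (hm : m = (k - 1) / 2)
    (μ : ℕ → ℝ)
    (hμ : ∀ l : ℕ, l ≤ k - 1 →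
      μ l = ((k : ℝ) / n) * (n.choose (l + 1)) / (k.choose (l + 1))) :
    (Matrix.of fun i j : Fin m => μ ((i : ℕ) + (j : ℕ) + 1)).PosDef := by
  obtain ⟨w, hw⟩ := hodd
  have hwm : w = m := by omega
  subst hwm
  obtain ⟨b, hb⟩ : ∃ b, n = 2*w+2+b := ⟨n-(2*w+2), by omega⟩
  subst hw hb
  set c : ℝ := ((2*w+1+b).factorial : ℝ) / ((2*w).factorial * b.factorial) with hc
  have hcpos : 0 < c := by positivity
  have hmom : ∀ l : ℕ, l ≤ 2*w →
      μ l = c * ∫ x in (0:ℝ)..1, x^(2*w-l)*(1-x)^b := by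
    intro l hl
    rw [hμ l (by omega), beta_nat]
    rw [hc]
    have := moment_eq w b l hl
    push_cast at this ⊢
    linarith [this]
  have hw1 : 1 ≤ w := by omega
  apply Matrix.PosDef.of_dotProduct_mulVec_pos
  · ext i j
    simp only [Matrix.conjTranspose_apply, Matrix.of_apply, star_trivial]
    congr 1
    omega
  · intro v hv
    have hstar : star v = v := by ext i; simp
    rw [hstar]
    set P : Polynomial ℝ := ∑ i : Fin w, Polynomial.C (v i) * Polynomial.X^(w-1-(i:ℕ)) with hP
    have hPev : ∀ x : ℝ, P.eval x = ∑ i : Fin w, v i * x^(w-1-(i:ℕ)) := by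
      intro x
      rw [hP, Polynomial.eval_finset_sum]
      simp
    have hPne : P ≠ 0 := by
      obtain ⟨i₀, hi₀⟩ := Function.ne_iff.mp hv
      simp only [Pi.zero_apply] at hi₀
      intro h0
      apply hi₀
      have hco : P.coeff (w-1-(i₀:ℕ)) = v i₀ := by
        rw [hP, Polynomial.finset_sum_coeff]
        rw [Finset.sum_eq_single i₀]
        · simp
        · intro i _ hne
          simp only [Polynomial.coeff_C_mul, Polynomial.coeff_X_pow]
          rw [if_neg]
          · ring
          · have := i.isLt; have := i₀.isLt
            intro hEq
            exact hne (by apply Fin.ext; omega)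
        · intro h; exact absurd (Finset.mem_univ i₀) h
      rw [h0] at hco
      simpa using hco.symm
    set f : ℝ → ℝ := fun x => c * (x * (1-x)^b) * (P.eval x)^2 with hf
    have hfc : Continuous f := by
      apply Continuous.mul
      · fun_prop
      · exact (Polynomial.continuous P).pow 2
    -- quadratic form equals the integral of f
    have key : v ⬝ᵥ ((Matrix.of fun i j : Fin w => μ ((i:ℕ)+(j:ℕ)+1)) *ᵥ v)
        = ∫ x in (0:ℝ)..1, f x := by
      have step1 : v ⬝ᵥ ((Matrix.of fun i j : Fin w => μ ((i:ℕ)+(j:ℕ)+1)) *ᵥ v)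
          = ∑ i : Fin w, ∑ j : Fin w, v i * v j * μ ((i:ℕ)+(j:ℕ)+1) := by
        simp only [dotProduct, Matrix.mulVec, Matrix.of_apply, Finset.mul_sum]
        apply Finset.sum_congr rfl
        intro i _
        apply Finset.sum_congr rfl
        intro j _
        ring
      rw [step1]
      set g : Fin w → Fin w → ℝ → ℝ :=
        fun i j x => v i * v j * c * (x^(w-1-(i:ℕ)) * x^(w-1-(j:ℕ)) * x * (1-x)^b) with hg
      have step2 : ∀ i j : Fin w,
          v i * v j * μ ((i:ℕ)+(j:ℕ)+1) = ∫ x in (0:ℝ)..1, g i j x := by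
        intro i j
        have hij : (i:ℕ)+(j:ℕ)+1 ≤ 2*w := by have := i.isLt; have := j.isLt; omega
        rw [hmom _ hij, ← intervalIntegral.integral_const_mul,
          ← intervalIntegral.integral_const_mul]
        rw [show (2*w - ((i:ℕ)+(j:ℕ)+1)) = (w-1-(i:ℕ)) + ((w-1-(j:ℕ)) + 1) by
          have := i.isLt; have := j.isLt; omega]
        apply intervalIntegral.integral_congr
        intro x _
        show v i * v j * (c * (x ^ ((w-1-(i:ℕ)) + ((w-1-(j:ℕ)) + 1)) * (1-x)^b)) = g i j x
        rw [hg]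
        simp only [pow_add, pow_one]
        ring
      have hint : ∀ (i j : Fin w),
          IntervalIntegrable (g i j) MeasureTheory.volume 0 1 := by
        intro i j
        apply Continuous.intervalIntegrable
        rw [hg]
        fun_prop
      have hint2 : ∀ i : Fin w,
          IntervalIntegrable (fun x => ∑ j : Fin w, g i j x) MeasureTheory.volume 0 1 := by
        intro i
        apply Continuous.intervalIntegrable
        apply continuous_finset_sum
        intro j _
        rw [hg]
        fun_prop
      have hsum1 : ∀ i : Fin w, ∑ j : Fin w, v i * v j * μ ((i:ℕ)+(j:ℕ)+1)
          = ∫ x in (0:ℝ)..1, ∑ j : Fin w, g i j x := by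
        intro i
        rw [intervalIntegral.integral_finset_sum (fun j _ => hint i j)]
        exact Finset.sum_congr rfl fun j _ => step2 i j
      have hsum2 : ∑ i : Fin w, ∑ j : Fin w, v i * v j * μ ((i:ℕ)+(j:ℕ)+1)
          = ∫ x in (0:ℝ)..1, ∑ i : Fin w, ∑ j : Fin w, g i j x := by
        calc ∑ i : Fin w, ∑ j : Fin w, v i * v j * μ ((i:ℕ)+(j:ℕ)+1)
            = ∑ i : Fin w, ∫ x in (0:ℝ)..1, ∑ j : Fin w, g i j x :=
              Finset.sum_congr rfl fun i _ => hsum1 i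
          _ = ∫ x in (0:ℝ)..1, ∑ i : Fin w, ∑ j : Fin w, g i j x :=
              (intervalIntegral.integral_finset_sum
                (f := fun (i : Fin w) (x : ℝ) => ∑ j : Fin w, g i j x)
                (fun i _ => hint2 i)).symm
      rw [hsum2]
      apply intervalIntegral.integral_congr
      intro x _
      show ∑ i : Fin w, ∑ j : Fin w, g i j x = f x
      rw [hf]
      simp only
      rw [hPev x, sq, Finset.sum_mul_sum, Finset.mul_sum]
      refine Finset.sum_congr rfl fun i _ => ?_
      rw [Finset.mul_sum]
      refine Finset.sum_congr rfl fun j _ => ?_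
      rw [hg]
      ring
    rw [key, intervalIntegral.integral_of_le zero_le_one]
    rw [MeasureTheory.setIntegral_pos_iff_support_of_nonneg_ae]
    · -- 0 < volume (support f ∩ Ioc 0 1)
      have hroots : MeasureTheory.volume {x : ℝ | P.IsRoot x} = 0 :=
        (Polynomial.finite_setOf_isRoot hPne).measure_zero _
      have hsub : Set.Ioo (0:ℝ) 1 \ {x : ℝ | P.IsRoot x} ⊆ Function.support f ∩ Set.Ioc 0 1 := by
        rintro x ⟨hx, hroot⟩
        refine ⟨?_, hx.1, hx.2.le⟩
        simp only [Function.mem_support, hf]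
        have h1x : (0:ℝ) < 1 - x := by linarith [hx.2]
        have hev : P.eval x ≠ 0 := hroot
        have h2 : 0 < (P.eval x)^2 := pow_two_pos_of_ne_zero hev
        exact ne_of_gt (mul_pos (mul_pos hcpos (mul_pos hx.1 (pow_pos h1x b))) h2)
      calc (0:ENNReal) < 1 := by norm_num
        _ = MeasureTheory.volume (Set.Ioo (0:ℝ) 1 \ {x : ℝ | P.IsRoot x}) := by
            rw [measure_diff_null hroots, Real.volume_Ioo]
            norm_num
        _ ≤ _ := measure_mono hsub
    · -- nonneg a.e.
      apply MeasureTheory.ae_restrict_of_forall_mem measurableSet_Ioc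
      intro x hx
      rw [hf]
      have h0x : (0:ℝ) < x := hx.1
      have h1x : (0:ℝ) ≤ 1 - x := by linarith [hx.2]
      positivity
    · exact hfc.integrableOn_Ioc
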